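/- arXiv:2512.22975 — 2 statements merged into one kernel-verified Lean document; each statement's English description precedes it below -/
import Mathlib

section
/- Let H be a module of a finite graph G such that H is a clique of G and H has at least one neighbor outside H, and let G|H be the graph obtained by contracting H into a single vertex. Then si(G) = si(G|H); moreover, G admits a simultaneous interval representation of size si(G) in which all vertices of H receive identical intervals and identical label sets. -/
def IsModule {V : Type*} (G : SimpleGraph V) (X : Set V) : Prop :=
  ∀ v ∉ X, (∀ x ∈ X, G.Adj v x) ∨ (∀ x ∈ X, ¬ G.Adj v x)

def contractSet {V : Type*} (G : SimpleGraph V) (H : Set V) :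
    SimpleGraph (Option {v : V // v ∉ H}) where
  Adj x y :=
    match x, y with
    | some a, some b => G.Adj a.1 b.1
    | some a, none => ∃ h ∈ H, G.Adj a.1 h
    | none, some b => ∃ h ∈ H, G.Adj b.1 h
    | none, none => False
  symm := by
    constructor
    rintro (_ | a) (_ | b) h
    · exact h
    · exact h
    · exact h
    · exact h.symm
  loopless := by
    constructor
    rintro (_ | a) h
    · exact h
    · exact G.loopless.irrefl a.1 h

/-- A `d`-simultaneous interval representation of `G`: each vertex gets a
closed real interval and a set of labels from `{1,…,d}` such that two distinct
vertices are adjacent iff their intervals and their label sets both intersect. -/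
def IsSimRep {V : Type*} (G : SimpleGraph V) (d : ℕ)
    (l r : V → ℝ) (lab : V → Set (Fin d)) : Prop :=
  (∀ v, l v ≤ r v) ∧
  ∀ u v : V, u ≠ v →
    (G.Adj u v ↔ (Set.Icc (l u) (r u) ∩ Set.Icc (l v) (r v)).Nonempty ∧
      (lab u ∩ lab v).Nonempty)

/-- The simultaneous interval number of `G`. -/
noncomputable def si {V : Type*} (G : SimpleGraph V) : ℕ :=
  sInf {d | ∃ (l r : V → ℝ) (lab : V → Set (Fin d)), IsSimRep G d l r lab}

lemma exists_simRep {V : Type*} [Fintype V] (G : SimpleGraph V) :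
    ∃ (d : ℕ) (l r : V → ℝ) (lab : V → Set (Fin d)), IsSimRep G d l r lab := by
  classical
  set e := Fintype.equivFin (V × V) with he
  refine ⟨Fintype.card (V × V), fun _ => 0, fun _ => 0,
    fun v => {i | ∃ a b, G.Adj a b ∧ i = e (a, b) ∧ (v = a ∨ v = b)},
    fun _ => le_refl 0, fun u v huv => ?_⟩
  constructor
  · intro h
    exact ⟨⟨0, by simp⟩, e (u, v), ⟨u, v, h, rfl, Or.inl rfl⟩,
      ⟨u, v, h, rfl, Or.inr rfl⟩⟩
  · rintro ⟨-, i, ⟨a, b, hab, rfl, hu⟩, ⟨a', b', hab', hi, hv⟩⟩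
    have hpair : (a', b') = (a, b) := e.injective hi.symm
    rw [Prod.mk.injEq] at hpair
    obtain ⟨ha, hb⟩ := hpair
    subst ha hb
    rcases hu with rfl | rfl <;> rcases hv with rfl | rfl
    · exact absurd rfl huv
    · exact hab
    · exact hab.symm
    · exact absurd rfl huv

lemma simRep_contract {V : Type*} (G : SimpleGraph V) (H : Set V)
    (hmod : IsModule G H) {h0 : V} (hh0 : h0 ∈ H) {d : ℕ}
    {l r : V → ℝ} {lab : V → Set (Fin d)} (hrep : IsSimRep G d l r lab) :
    ∃ (l' r' : Option {v : V // v ∉ H} → ℝ)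
      (lab' : Option {v : V // v ∉ H} → Set (Fin d)),
      IsSimRep (contractSet G H) d l' r' lab' := by
  have key : ∀ b : {v : V // v ∉ H}, (∃ h ∈ H, G.Adj b.1 h) ↔ G.Adj b.1 h0 := by
    intro b
    constructor
    · rintro ⟨h, hH, hadj⟩
      rcases hmod b.1 b.2 with hall | hnone
      · exact hall h0 hh0
      · exact absurd hadj (hnone h hH)
    · intro h; exact ⟨h0, hh0, h⟩
  refine ⟨fun x => match x with | none => l h0 | some a => l a.1,
    fun x => match x with | none => r h0 | some a => r a.1,
    fun x => match x with | none => lab h0 | some a => lab a.1, ?_, ?_⟩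
  · rintro (_ | a) <;> exact hrep.1 _
  · rintro (_ | a) (_ | b) huv
    · exact absurd rfl huv
    · -- none, some b
      have hb : h0 ≠ b.1 := fun h => b.2 (h ▸ hh0)
      show (∃ h ∈ H, G.Adj b.1 h) ↔ _
      rw [key, G.adj_comm]
      exact hrep.2 h0 b.1 hb
    · -- some a, none
      have ha : a.1 ≠ h0 := fun h => a.2 (h ▸ hh0)
      show (∃ h ∈ H, G.Adj a.1 h) ↔ _
      rw [key]
      exact hrep.2 a.1 h0 ha
    · -- some a, some b
      have hab : a.1 ≠ b.1 := fun h => huv (by cases a; cases b; simp_all)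
      exact hrep.2 a.1 b.1 hab

lemma simRep_of_contract {V : Type*} (G : SimpleGraph V) (H : Set V)
    (hne : H.Nonempty) (hmod : IsModule G H) (hcomplete : G.IsClique H)
    (hnbr : ∃ v ∉ H, ∀ x ∈ H, G.Adj v x) {d : ℕ}
    {l r : Option {v : V // v ∉ H} → ℝ}
    {lab : Option {v : V // v ∉ H} → Set (Fin d)}
    (hrep : IsSimRep (contractSet G H) d l r lab) :
    ∃ (l' r' : V → ℝ) (lab' : V → Set (Fin d)), IsSimRep G d l' r' lab' ∧
      ∀ a ∈ H, ∀ b ∈ H, l' a = l' b ∧ r' a = r' b ∧ lab' a = lab' b := by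
  classical
  obtain ⟨h1, hh1⟩ := hne
  obtain ⟨v0, hv0, hall⟩ := hnbr
  have hlabnone : (lab none).Nonempty := by
    have hadj : (contractSet G H).Adj (some ⟨v0, hv0⟩) none :=
      ⟨h1, hh1, hall h1 hh1⟩
    obtain ⟨-, i, -, hi⟩ := (hrep.2 _ _ (Option.some_ne_none _)).1 hadj
    exact ⟨i, hi⟩
  have modIff : ∀ u, u ∈ H → ∀ v (hv : v ∉ H),
      (G.Adj u v ↔ (contractSet G H).Adj none (some ⟨v, hv⟩)) := by
    intro u hu v hv
    show G.Adj u v ↔ ∃ h ∈ H, G.Adj v h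
    constructor
    · intro h; exact ⟨u, hu, h.symm⟩
    · rintro ⟨h, hH, hadj⟩
      rcases hmod v hv with hall' | hnone
      · exact (hall' u hu).symm
      · exact absurd hadj (hnone h hH)
  refine ⟨fun v => if h : v ∈ H then l none else l (some ⟨v, h⟩),
    fun v => if h : v ∈ H then r none else r (some ⟨v, h⟩),
    fun v => if h : v ∈ H then lab none else lab (some ⟨v, h⟩),
    ⟨?_, ?_⟩, ?_⟩
  · intro v
    by_cases h : v ∈ H <;> simp only [h, dif_pos, dif_neg, not_false_iff] <;>
      exact hrep.1 _
  · intro u v huv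
    by_cases hu : u ∈ H <;> by_cases hv : v ∈ H <;>
      simp only [hu, hv, dif_pos, dif_neg, not_false_iff]
    · -- both in H
      have hadj : G.Adj u v := hcomplete hu hv huv
      refine iff_of_true hadj ⟨⟨l none, ?_, ?_⟩, hlabnone.mono ?_⟩
      · exact ⟨le_refl _, hrep.1 none⟩
      · exact ⟨le_refl _, hrep.1 none⟩
      · intro i hi; exact ⟨hi, hi⟩
    · -- u ∈ H, v ∉ H
      rw [modIff u hu v hv]
      exact hrep.2 none (some ⟨v, hv⟩) (Ne.symm (Option.some_ne_none _))
    · -- u ∉ H, v ∈ H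
      rw [G.adj_comm, modIff v hv u hu, (contractSet G H).adj_comm]
      exact hrep.2 (some ⟨u, hu⟩) none (Option.some_ne_none _)
    · -- both not in H
      exact hrep.2 (some ⟨u, hu⟩) (some ⟨v, hv⟩) (by simp [Subtype.ext_iff, huv])
  · intro a ha b hb
    simp only [ha, hb, dif_pos]
    exact ⟨trivial, trivial, trivial⟩

/-- Contracting a complete module having a neighbor outside into a single
vertex preserves the simultaneous interval number; moreover `G` admits an
optimal representation in which all vertices of the module receive identical
intervals and identical label sets. -/
theorem si_contract_complete_module {V : Type*} [Fintype V]
    (G : SimpleGraph V) (H : Set V) (hne : H.Nonempty) (hmod : IsModule G H)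
    (hcomplete : G.IsClique H)
    (hnbr : ∃ v ∉ H, ∀ x ∈ H, G.Adj v x) :
    si G = si (contractSet G H) ∧
    ∃ (l r : V → ℝ) (lab : V → Set (Fin (si G))), IsSimRep G (si G) l r lab ∧
      ∀ a ∈ H, ∀ b ∈ H, l a = l b ∧ r a = r b ∧ lab a = lab b := by
  classical
  obtain ⟨h0, hh0⟩ := hne
  have hset : {d : ℕ | ∃ (l r : V → ℝ) (lab : V → Set (Fin d)), IsSimRep G d l r lab} =
      {d : ℕ | ∃ (l r : Option {v : V // v ∉ H} → ℝ)
        (lab : Option {v : V // v ∉ H} → Set (Fin d)),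
        IsSimRep (contractSet G H) d l r lab} := by
    ext d
    constructor
    · rintro ⟨l, r, lab, hrep⟩
      exact simRep_contract G H hmod hh0 hrep
    · rintro ⟨l, r, lab, hrep⟩
      obtain ⟨l', r', lab', h, -⟩ :=
        simRep_of_contract G H ⟨h0, hh0⟩ hmod hcomplete hnbr hrep
      exact ⟨l', r', lab', h⟩
  have hsi : si G = si (contractSet G H) := by
    unfold si; rw [hset]
  refine ⟨hsi, ?_⟩
  haveI : Fintype {v : V // v ∉ H} := Subtype.fintype _
  have hmem : si (contractSet G H) ∈
      {d : ℕ | ∃ (l r : Option {v : V // v ∉ H} → ℝ)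
        (lab : Option {v : V // v ∉ H} → Set (Fin d)),
        IsSimRep (contractSet G H) d l r lab} := by
    apply Nat.sInf_mem
    obtain ⟨d, l, r, lab, h⟩ := exists_simRep (contractSet G H)
    exact ⟨d, l, r, lab, h⟩
  rw [hsi]
  obtain ⟨l, r, lab, hrep⟩ := hmem
  exact simRep_of_contract G H ⟨h0, hh0⟩ hmod hcomplete hnbr hrep
end

section
/- Let G1 and G2 be finite nonempty graphs. The join G1 ∨ G2 is an interval graph if and only if one of G1, G2 is a complete graph and the other is an interval graph. -/
def IsIntervalGraph {V : Type*} (G : SimpleGraph V) : Prop :=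
  ∃ l r : V → ℝ, (∀ v, l v ≤ r v) ∧
    ∀ u v : V, u ≠ v →
      (G.Adj u v ↔ (Set.Icc (l u) (r u) ∩ Set.Icc (l v) (r v)).Nonempty)

def IsCompleteGraph {V : Type*} (G : SimpleGraph V) : Prop :=
  ∀ u v : V, u ≠ v → G.Adj u v

def joinGraph {V₁ V₂ : Type*} (G₁ : SimpleGraph V₁) (G₂ : SimpleGraph V₂) :
    SimpleGraph (V₁ ⊕ V₂) where
  Adj x y :=
    match x, y with
    | .inl a, .inl b => G₁.Adj a b
    | .inr a, .inr b => G₂.Adj a b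
    | .inl _, .inr _ => True
    | .inr _, .inl _ => True
  symm := by
    constructor
    rintro (a | a) (b | b) h
    · exact h.symm
    · trivial
    · trivial
    · exact h.symm
  loopless := by
    constructor
    rintro (a | a) h
    · exact G₁.irrefl h
    · exact G₂.irrefl h

lemma join_left_complete {V₁ V₂ : Type*} [Fintype V₂] [Nonempty V₂]
    (G₁ : SimpleGraph V₁) (G₂ : SimpleGraph V₂)
    (h1 : IsCompleteGraph G₁) (h2 : IsIntervalGraph G₂) :
    IsIntervalGraph (joinGraph G₁ G₂) := by
  obtain ⟨l, r, hlr, hadj⟩ := h2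
  set A : ℝ := Finset.univ.inf' Finset.univ_nonempty l with hA
  set B : ℝ := Finset.univ.sup' Finset.univ_nonempty r with hB
  have hAl : ∀ w : V₂, A ≤ l w := fun w => Finset.inf'_le _ (Finset.mem_univ w)
  have hrB : ∀ w : V₂, r w ≤ B := fun w => Finset.le_sup' _ (Finset.mem_univ w)
  have hAB : A ≤ B := by
    obtain ⟨w⟩ := (inferInstance : Nonempty V₂)
    exact (hAl w).trans ((hlr w).trans (hrB w))
  refine ⟨Sum.elim (fun _ => A) l, Sum.elim (fun _ => B) r, ?_, ?_⟩
  · rintro (a | w)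
    · exact hAB
    · exact hlr w
  · rintro (a | w) (b | w') hne
    · simp only [Sum.elim_inl]
      constructor
      · intro _
        exact ⟨A, ⟨le_rfl, hAB⟩, ⟨le_rfl, hAB⟩⟩
      · intro _
        exact h1 a b (fun h => hne (congrArg Sum.inl h))
    · simp only [Sum.elim_inl, Sum.elim_inr]
      constructor
      · intro _
        exact ⟨l w', ⟨hAl w', (hlr w').trans (hrB w')⟩, ⟨le_rfl, hlr w'⟩⟩
      · intro _; trivial
    · simp only [Sum.elim_inl, Sum.elim_inr]
      constructor
      · intro _
        exact ⟨l w, ⟨le_rfl, hlr w⟩, ⟨hAl w, (hlr w).trans (hrB w)⟩⟩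
      · intro _; trivial
    · simp only [Sum.elim_inr]
      exact hadj w w' (fun h => hne (congrArg Sum.inr h))

lemma join_right_complete {V₁ V₂ : Type*} [Fintype V₁] [Nonempty V₁]
    (G₁ : SimpleGraph V₁) (G₂ : SimpleGraph V₂)
    (h2 : IsCompleteGraph G₂) (h1 : IsIntervalGraph G₁) :
    IsIntervalGraph (joinGraph G₁ G₂) := by
  obtain ⟨l, r, hlr, hadj⟩ := h1
  set A : ℝ := Finset.univ.inf' Finset.univ_nonempty l with hA
  set B : ℝ := Finset.univ.sup' Finset.univ_nonempty r with hB
  have hAl : ∀ w : V₁, A ≤ l w := fun w => Finset.inf'_le _ (Finset.mem_univ w)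
  have hrB : ∀ w : V₁, r w ≤ B := fun w => Finset.le_sup' _ (Finset.mem_univ w)
  have hAB : A ≤ B := by
    obtain ⟨w⟩ := (inferInstance : Nonempty V₁)
    exact (hAl w).trans ((hlr w).trans (hrB w))
  refine ⟨Sum.elim l (fun _ => A), Sum.elim r (fun _ => B), ?_, ?_⟩
  · rintro (w | a)
    · exact hlr w
    · exact hAB
  · rintro (w | a) (w' | b) hne
    · simp only [Sum.elim_inl]
      exact hadj w w' (fun h => hne (congrArg Sum.inl h))
    · simp only [Sum.elim_inl, Sum.elim_inr]
      constructor
      · intro _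
        exact ⟨l w, ⟨le_rfl, hlr w⟩, ⟨hAl w, (hlr w).trans (hrB w)⟩⟩
      · intro _; trivial
    · simp only [Sum.elim_inl, Sum.elim_inr]
      constructor
      · intro _
        exact ⟨l w', ⟨hAl w', (hlr w').trans (hrB w')⟩, ⟨le_rfl, hlr w'⟩⟩
      · intro _; trivial
    · simp only [Sum.elim_inr]
      constructor
      · intro _
        exact ⟨A, ⟨le_rfl, hAB⟩, ⟨le_rfl, hAB⟩⟩
      · intro _
        exact h2 a b (fun h => hne (congrArg Sum.inr h))

/-- The join of two finite nonempty graphs is an interval graph iff one of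
them is complete and the other is an interval graph. -/
theorem join_isIntervalGraph_iff {V₁ V₂ : Type*} [Fintype V₁] [Fintype V₂]
    [Nonempty V₁] [Nonempty V₂] (G₁ : SimpleGraph V₁) (G₂ : SimpleGraph V₂) :
    IsIntervalGraph (joinGraph G₁ G₂) ↔
      (IsCompleteGraph G₁ ∧ IsIntervalGraph G₂) ∨
      (IsCompleteGraph G₂ ∧ IsIntervalGraph G₁) := by
  constructor
  · rintro ⟨l, r, hlr, hadj⟩
    have hG1 : IsIntervalGraph G₁ := by
      refine ⟨fun v => l (.inl v), fun v => r (.inl v), fun v => hlr _, fun u v huv => ?_⟩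
      exact hadj (.inl u) (.inl v) (fun h => huv (by injection h))
    have hG2 : IsIntervalGraph G₂ := by
      refine ⟨fun v => l (.inr v), fun v => r (.inr v), fun v => hlr _, fun u v huv => ?_⟩
      exact hadj (.inr u) (.inr v) (fun h => huv (by injection h))
    by_cases hc : IsCompleteGraph G₁
    · exact Or.inl ⟨hc, hG2⟩
    · refine Or.inr ⟨?_, hG1⟩
      -- G₁ has two nonadjacent vertices a, b
      rw [IsCompleteGraph] at hc
      push_neg at hc
      obtain ⟨a, b, hab, hnadj⟩ := hc
      have hempty : ¬ (Set.Icc (l (.inl a)) (r (.inl a)) ∩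
          Set.Icc (l (.inl b)) (r (.inl b))).Nonempty := by
        intro h
        exact hnadj ((hadj (.inl a) (.inl b)
          (fun h' => hab (by injection h'))).mpr h)
      have hsplit : r (.inl a) < l (.inl b) ∨ r (.inl b) < l (.inl a) := by
        by_contra h
        push_neg at h
        exact hempty ⟨max (l (.inl a)) (l (.inl b)),
          ⟨le_max_left _ _, max_le (hlr _) h.1⟩,
          ⟨le_max_right _ _, max_le h.2 (hlr _)⟩⟩
      have key : ∀ p : ℝ, (∀ w : V₂, l (.inr w) ≤ p ∧ p ≤ r (.inr w)) →
          IsCompleteGraph G₂ := by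
        intro p hp w w' hne
        exact (hadj (.inr w) (.inr w') (fun h => hne (by injection h))).mpr
          ⟨p, ⟨(hp w).1, (hp w).2⟩, ⟨(hp w').1, (hp w').2⟩⟩
      have meet : ∀ (c : V₁) (w : V₂),
          (Set.Icc (l (.inl c)) (r (.inl c)) ∩
            Set.Icc (l (.inr w)) (r (.inr w))).Nonempty := fun c w =>
        (hadj (.inl c) (.inr w) (by simp)).mp trivial
      rcases hsplit with h | h
      · refine key (r (.inl a)) (fun w => ?_)
        obtain ⟨x, hx1, hx2⟩ := meet a w
        obtain ⟨y, hy1, hy2⟩ := meet b w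
        exact ⟨hx2.1.trans hx1.2, le_trans (le_of_lt h) (hy1.1.trans hy2.2)⟩
      · refine key (r (.inl b)) (fun w => ?_)
        obtain ⟨x, hx1, hx2⟩ := meet b w
        obtain ⟨y, hy1, hy2⟩ := meet a w
        exact ⟨hx2.1.trans hx1.2, le_trans (le_of_lt h) (hy1.1.trans hy2.2)⟩
  · rintro (⟨h1, h2⟩ | ⟨h2, h1⟩)
    · exact join_left_complete G₁ G₂ h1 h2
    · exact join_right_complete G₁ G₂ h2 h1
end
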